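/- arXiv:2512.21242 — 2 statements merged into one kernel-verified Lean document; each statement's English description precedes it below -/
import Mathlib

section
/- Let G be a finite group with subgroups H ≤ A ⊴ G (A normal in G), and suppose that |A| is odd or the index |G:A| is odd. Then A is a perfect code of the pair (G,H) if and only if G = N_G(H)A. -/
/-!
If `A` is a perfect code and `g ∉ A`, let `bH` be the unique neighbour of `gH` among the cosets
inside `A`. For `h ∈ H` the coset `g h g⁻¹ b H` is such a neighbour too, so `x = g⁻¹ b`
normalises `H` and `g ∈ N_G(H) A`. Conversely, if `G = N_G(H) A`, choose representatives
`t(q) ∈ N_G(H)` of the cosets `q` of `A` with `t(q) t(q⁻¹) ∈ H`; then `U = ⋃_{q ≠ 1} t(q) H` is a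
connection set in which every vertex outside `A` has exactly one neighbour in `A`. Such a choice
is free on pairs `q ≠ q⁻¹`. For `q = q⁻¹` and `|A|` odd, replace `n ∈ q` by `n^m`, where `m` is
the odd order of `n² ∈ A`; for `|G:A|` odd, `G/A` has no involutions.
-/

open scoped Pointwise

/-- A subset `C` of the vertices of a graph `Γ` is an `(r,s)`-regular set if every vertex
in `C` has exactly `r` neighbours in `C` and every vertex outside `C` has exactly `s`
neighbours in `C`. -/
def IsRegularVertexSet {V : Type*} (Γ : SimpleGraph V) (C : Set V) (r s : ℕ) : Prop :=
  (∀ v ∈ C, {w | w ∈ C ∧ Γ.Adj v w}.ncard = r) ∧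
  ∀ v ∉ C, {w | w ∈ C ∧ Γ.Adj v w}.ncard = s

/-- The coset graph `Cos(G,H,U)` on the left cosets of `H` in `G`:
`g₁H` and `g₂H` are adjacent iff `g₁⁻¹ g₂ ∈ U`. -/
def cosetGraph {G : Type*} [Group G] (H : Subgroup G) (U : Set G) : SimpleGraph (G ⧸ H) :=
  SimpleGraph.fromRel fun C D =>
    ∃ g₁ g₂ : G, QuotientGroup.mk g₁ = C ∧ QuotientGroup.mk g₂ = D ∧ g₁⁻¹ * g₂ ∈ U

/-- `U` is a valid connection set for a coset graph `Cos(G,H,U)`: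
inverse-closed, disjoint from `H`, and a union of double cosets of `H` (`HUH = U`). -/
def IsCosetGraphConnectionSet {G : Type*} [Group G] (H : Subgroup G) (U : Set G) : Prop :=
  U⁻¹ = U ∧ (H : Set G) ∩ U = ∅ ∧ (H : Set G) * U * (H : Set G) = U

/-- `A` is an `(r,s)`-regular set of the pair `(G,H)`: there is a coset graph
`Cos(G,H,U)` in which the set of left cosets of `H` in `A` is an `(r,s)`-regular set. -/
def IsRegularSetOfPair {G : Type*} [Group G] (H A : Subgroup G) (r s : ℕ) : Prop :=
  ∃ U : Set G, IsCosetGraphConnectionSet H U ∧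
    IsRegularVertexSet (cosetGraph H U)
      {C : G ⧸ H | ∃ a ∈ A, QuotientGroup.mk a = C} r s

/-- `A` is a perfect code of the pair `(G,H)` iff it is a `(0,1)`-regular set of `(G,H)`. -/
def IsPerfectCodeOfPair {G : Type*} [Group G] (H A : Subgroup G) : Prop :=
  IsRegularSetOfPair H A 0 1

/-- A subgroup `A` is an `(r,s)`-regular set of `G` iff it is an `(r,s)`-regular set of
the pair `(G,1)`, i.e. an `(r,s)`-regular set in some Cayley graph of `G`. -/
def IsRegularSetOfGroup {G : Type*} [Group G] (A : Subgroup G) (r s : ℕ) : Prop :=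
  IsRegularSetOfPair ⊥ A r s

/-- A subgroup `A` is a perfect code of `G` iff it is a `(0,1)`-regular set of `G`. -/
def IsPerfectCodeOfGroup {G : Type*} [Group G] (A : Subgroup G) : Prop :=
  IsRegularSetOfGroup A 0 1

/-- The conjugate subgroup `K^t = t⁻¹ K t`. -/
def conjSub {G : Type*} [Group G] (K : Subgroup G) (t : G) : Subgroup G :=
  K.map (MulAut.conj t⁻¹).toMonoidHom

theorem Function.Involutive.exists_set_apply_mem_iff_notMem {α : Type*} {σ : α → α}
    (hσ : Function.Involutive σ) : ∃ S : Set α, ∀ x, σ x ≠ x → (σ x ∈ S ↔ x ∉ S) := by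
  refine ⟨{x | WellOrderingRel x (σ x)}, fun x hx ↦ ?_⟩
  change WellOrderingRel (σ x) (σ (σ x)) ↔ ¬WellOrderingRel x (σ x)
  rw [hσ x]
  rcases trichotomous_of WellOrderingRel x (σ x) with h | h | h
  · exact iff_of_false (asymm h) (not_not.mpr h)
  · exact absurd h.symm hx
  · exact iff_of_true h (asymm h)

theorem eq_one_of_mul_self_eq_one_of_odd_natCard {G : Type*} [Group G] (hG : Odd (Nat.card G))
    {x : G} (hx : x * x = 1) : x = 1 := by
  have hodd : Odd (orderOf x) := hG.of_dvd_nat (orderOf_dvd_natCard x)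
  have hdvd : orderOf x ∣ 2 := orderOf_dvd_of_pow_eq_one (by rwa [sq])
  rcases (Nat.dvd_prime Nat.prime_two).mp hdvd with h | h
  · exact orderOf_eq_one_iff.mp h
  · exact absurd (h ▸ hodd) (by decide)

theorem exists_odd_pow_mul_self_eq_one {G : Type*} [Group G] {x : G}
    (hx : Odd (orderOf (x * x))) : ∃ k : ℕ, x ^ (2 * k + 1) * x ^ (2 * k + 1) = 1 := by
  obtain ⟨k, hk⟩ := hx
  exact ⟨k, by rw [← (Commute.refl x).mul_pow, ← hk, pow_orderOf_eq_one]⟩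

section CosetGraph

variable {G : Type*} [Group G] {H : Subgroup G} {U : Set G}

theorem IsCosetGraphConnectionSet.mul_mem_mul (hU : IsCosetGraphConnectionSet H U)
    {h₁ u h₂ : G} (h₁H : h₁ ∈ H) (hu : u ∈ U) (h₂H : h₂ ∈ H) : h₁ * u * h₂ ∈ U := by
  rw [← hU.2.2]
  exact Set.mul_mem_mul (Set.mul_mem_mul h₁H hu) h₂H

theorem IsCosetGraphConnectionSet.inv_mul_mem_of_mk_eq (hU : IsCosetGraphConnectionSet H U)
    {a b g₁ g₂ : G} (ha : (a : G ⧸ H) = g₁) (hb : (b : G ⧸ H) = g₂) (hab : a⁻¹ * b ∈ U) :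
    g₁⁻¹ * g₂ ∈ U := by
  have key : g₁⁻¹ * g₂ = (a⁻¹ * g₁)⁻¹ * (a⁻¹ * b) * (b⁻¹ * g₂) := by group
  rw [key]
  exact hU.mul_mem_mul (inv_mem (QuotientGroup.eq.mp ha)) hab (QuotientGroup.eq.mp hb)

theorem IsCosetGraphConnectionSet.inv_mem (hU : IsCosetGraphConnectionSet H U) {u : G}
    (hu : u ∈ U) : u⁻¹ ∈ U := by
  rwa [← Set.mem_inv, hU.1]

theorem cosetGraph_adj_mk (hU : IsCosetGraphConnectionSet H U) (g₁ g₂ : G) :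
    (cosetGraph H U).Adj g₁ g₂ ↔ g₁⁻¹ * g₂ ∈ U := by
  rw [cosetGraph, SimpleGraph.fromRel_adj]
  constructor
  · rintro ⟨-, ⟨a, b, ha, hb, hab⟩ | ⟨a, b, ha, hb, hab⟩⟩
    · exact hU.inv_mul_mem_of_mk_eq ha hb hab
    · simpa using hU.inv_mem (hU.inv_mul_mem_of_mk_eq ha hb hab)
  · intro hu
    refine ⟨fun h ↦ ?_, .inl ⟨g₁, g₂, rfl, rfl, hu⟩⟩
    exact (Set.eq_empty_iff_forall_notMem.mp hU.2.1) _ ⟨QuotientGroup.eq.mp h, hu⟩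

theorem mk_mem_cosetsIn_iff {A : Subgroup G} (hHA : H ≤ A) (g : G) :
    (g : G ⧸ H) ∈ {C : G ⧸ H | ∃ a ∈ A, QuotientGroup.mk a = C} ↔ g ∈ A := by
  refine ⟨fun ⟨a, ha, hag⟩ ↦ ?_, fun hg ↦ ⟨g, hg, rfl⟩⟩
  simpa using mul_mem ha (hHA (QuotientGroup.eq.mp hag))

end CosetGraph

theorem IsPerfectCodeOfPair.normalizer_mul_eq_univ {G : Type*} [Group G] [Finite G]
    {H A : Subgroup G} (hHA : H ≤ A) [A.Normal] (hcode : IsPerfectCodeOfPair H A) :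
    (Subgroup.normalizer (H : Set G) : Set G) * (A : Set G) = Set.univ := by
  obtain ⟨U, hU, -, hout⟩ := hcode
  refine Set.eq_univ_of_forall fun g ↦ ?_
  by_cases hg : g ∈ A
  · exact ⟨1, one_mem _, g, hg, one_mul g⟩
  obtain ⟨w, hw⟩ := Set.ncard_eq_one.mp (hout g (by rwa [mk_mem_cosetsIn_iff hHA]))
  have mem_nbhd {b : G} (hb : b ∈ A) (hgb : g⁻¹ * b ∈ U) : (b : G ⧸ H) = w := by
    have hmem : (b : G ⧸ H) ∈ {w | w ∈ {C : G ⧸ H | ∃ a ∈ A, QuotientGroup.mk a = C} ∧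
        (cosetGraph H U).Adj g w} := ⟨⟨b, hb, rfl⟩, (cosetGraph_adj_mk hU g b).mpr hgb⟩
    rwa [hw] at hmem
  obtain ⟨⟨b, hb, rfl⟩, hadj⟩ : w ∈ {w | w ∈ {C : G ⧸ H | ∃ a ∈ A, QuotientGroup.mk a = C} ∧
      (cosetGraph H U).Adj g w} := hw ▸ rfl
  set x := g⁻¹ * b with hx
  have hxU : x ∈ U := (cosetGraph_adj_mk hU g b).mp hadj
  -- `g h x H` and `x H` are both `A`-neighbours of `g H`, so they coincide.
  have hxN : x⁻¹ ∈ Subgroup.normalizer (H : Set G) := by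
    refine Subgroup.mem_normalizer_fintype fun h hh ↦ ?_
    have hgh : (↑(g * h⁻¹ * x) : G ⧸ H) = b := by
      refine (mem_nbhd ?_ ?_).trans (mem_nbhd hb hxU).symm
      · simpa [hx, mul_assoc] using mul_mem (‹A.Normal›.conj_mem _ (hHA (inv_mem hh)) g) hb
      · simpa [mul_assoc] using hU.mul_mem_mul (inv_mem hh) hxU (one_mem H)
    simpa [hx, mul_assoc] using QuotientGroup.eq.mp hgh
  exact ⟨x⁻¹, hxN, x * b * x⁻¹, ‹A.Normal›.conj_mem b hb x, by rw [hx]; group⟩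

theorem exists_mem_mk_eq_of_mul_eq_univ {G : Type*} [Group G] {K A : Subgroup G}
    (hKA : (K : Set G) * (A : Set G) = Set.univ) (q : G ⧸ A) : ∃ n ∈ K, (n : G ⧸ A) = q := by
  obtain ⟨g, rfl⟩ := QuotientGroup.mk_surjective q
  obtain ⟨n, hn, a, ha, rfl⟩ := hKA.symm ▸ Set.mem_univ g
  exact ⟨n, hn, QuotientGroup.eq.mpr (by simpa using ha)⟩

theorem exists_transversal_mul_inv_mem {G : Type*} [Group G] {H K A : Subgroup G} [A.Normal]
    (hKA : (K : Set G) * (A : Set G) = Set.univ)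
    (hsq : ∀ q : G ⧸ A, q * q = 1 → ∃ n ∈ K, (n : G ⧸ A) = q ∧ n * n ∈ H) :
    ∃ t : G ⧸ A → G, (∀ q, t q ∈ K) ∧ (∀ q, (t q : G ⧸ A) = q) ∧ ∀ q, t q * t q⁻¹ ∈ H := by
  classical
  -- `S` contains exactly one coset of each pair `q ≠ q⁻¹`
  obtain ⟨S, hS⟩ := (inv_involutive (G := G ⧸ A)).exists_set_apply_mem_iff_notMem
  choose s hsK hsmk using exists_mem_mk_eq_of_mul_eq_univ hKA
  choose w hwK hwq hwH using hsq
  refine ⟨fun q ↦ if hq : q * q = 1 then w q hq else if q ∈ S then s q else (s q⁻¹)⁻¹,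
    fun q ↦ ?_, fun q ↦ ?_, fun q ↦ ?_⟩ <;> dsimp only
  · split_ifs
    exacts [hwK _ _, hsK q, inv_mem (hsK _)]
  · split_ifs
    exacts [hwq _ _, hsmk q, by simp [hsmk]]
  by_cases hq : q * q = 1
  · rw [inv_eq_of_mul_eq_one_right hq]
    simpa [hq] using hwH _ hq
  have hq' : q⁻¹ * q⁻¹ ≠ 1 := by simpa [← mul_inv_rev] using hq
  have hSq := hS q (fun h ↦ hq (by simpa [h] using mul_inv_cancel q))
  by_cases hqS : q ∈ S
  · simp [hq, hq', hqS, hSq.not_left.mpr hqS]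
  · simp [hq, hq', hqS, hSq.mpr hqS]

theorem exists_mem_mk_eq_mul_self_mem_of_odd {G : Type*} [Group G] {H K A : Subgroup G}
    [A.Normal] (hKA : (K : Set G) * (A : Set G) = Set.univ)
    (hodd : Odd (Nat.card A) ∨ Odd A.index) (q : G ⧸ A) (hq : q * q = 1) :
    ∃ n ∈ K, (n : G ⧸ A) = q ∧ n * n ∈ H := by
  rcases hodd with hA | hA
  · obtain ⟨n, hnK, rfl⟩ := exists_mem_mk_eq_of_mul_eq_univ hKA q
    have hnn : n * n ∈ A := (QuotientGroup.eq_one_iff _).mp hq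
    -- `n²` has odd order `2k + 1`, so `n^(2k+1)` lies in `nA` and squares to `1`
    obtain ⟨k, hk⟩ := exists_odd_pow_mul_self_eq_one
      (hA.of_dvd_nat (Subgroup.orderOf_mk (n * n) hnn ▸ orderOf_dvd_natCard _))
    refine ⟨n ^ (2 * k + 1), pow_mem hnK _, ?_, hk ▸ one_mem H⟩
    rw [QuotientGroup.mk_pow, pow_succ, pow_mul, sq, hq, one_pow, one_mul]
  · obtain rfl := eq_one_of_mul_self_eq_one_of_odd_natCard hA hq
    exact ⟨1, one_mem K, QuotientGroup.mk_one A, by simp⟩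

section Transversal

variable {G : Type*} [Group G]

/-- The connection set `⋃_{q ≠ 1} t(q) H`. -/
def transversalConnectionSet (H A : Subgroup G) [A.Normal] (t : G ⧸ A → G) : Set G :=
  {g | (g : G ⧸ A) ≠ 1 ∧ (t g)⁻¹ * g ∈ H}

variable {H A : Subgroup G} [A.Normal] {t : G ⧸ A → G}

theorem transversalConnectionSet_isCosetGraphConnectionSet (hHA : H ≤ A)
    (ht_mem : ∀ q, t q ∈ Subgroup.normalizer (H : Set G)) (ht_inv : ∀ q, t q * t q⁻¹ ∈ H) :
    IsCosetGraphConnectionSet H (transversalConnectionSet H A t) := by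
  have conj_mem {n h : G} (hn : n ∈ Subgroup.normalizer (H : Set G)) (hh : h ∈ H) :
      n⁻¹ * h * n ∈ H := (Subgroup.mem_normalizer_iff''.mp hn h).mp hh
  have mk_eq_one {h : G} (hh : h ∈ H) : (h : G ⧸ A) = 1 :=
    (QuotientGroup.eq_one_iff h).mpr (hHA hh)
  have inv_mem {g : G} (hg : g ∈ transversalConnectionSet H A t) :
      g⁻¹ ∈ transversalConnectionSet H A t := by
    obtain ⟨hg1, hgH⟩ := hg
    refine ⟨by simpa using hg1, ?_⟩
    set q : G ⧸ A := (g : G ⧸ A)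
    rw [QuotientGroup.mk_inv]
    have key : (t q⁻¹)⁻¹ * g⁻¹ = ((t q⁻¹)⁻¹ * ((t q)⁻¹ * g)⁻¹ * t q⁻¹) * (t q * t q⁻¹)⁻¹ := by
      group
    rw [key]
    exact mul_mem (conj_mem (ht_mem _) (Subgroup.inv_mem _ hgH)) (Subgroup.inv_mem _ (ht_inv q))
  refine ⟨Set.ext fun g ↦ ⟨fun hg ↦ inv_inv g ▸ inv_mem hg, inv_mem⟩, ?_, ?_⟩
  · exact Set.eq_empty_of_forall_notMem fun g ⟨hgH, hgU⟩ ↦ hgU.1 (mk_eq_one hgH)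
  refine subset_antisymm ?_ fun u hu ↦
    ⟨u, ⟨1, one_mem H, u, hu, one_mul u⟩, 1, one_mem H, mul_one u⟩
  rintro _ ⟨_, ⟨h₁, hh₁, u, ⟨hu1, huH⟩, rfl⟩, h₂, hh₂, rfl⟩
  have hq : ((h₁ * u * h₂ : G) : G ⧸ A) = u := by simp [mk_eq_one hh₁, mk_eq_one hh₂]
  refine ⟨hq ▸ hu1, ?_⟩
  rw [hq, show (t u)⁻¹ * (h₁ * u * h₂) = ((t u)⁻¹ * h₁ * t u) * ((t u)⁻¹ * u) * h₂ by group]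
  exact mul_mem (mul_mem (conj_mem (ht_mem _) hh₁) huH) hh₂

theorem isPerfectCodeOfPair_of_transversal (hHA : H ≤ A)
    (ht_mem : ∀ q, t q ∈ Subgroup.normalizer (H : Set G)) (ht_mk : ∀ q, (t q : G ⧸ A) = q)
    (ht_inv : ∀ q, t q * t q⁻¹ ∈ H) : IsPerfectCodeOfPair H A := by
  have hU := transversalConnectionSet_isCosetGraphConnectionSet hHA ht_mem ht_inv
  have mk_eq_one {a : G} (ha : a ∈ A) : (a : G ⧸ A) = 1 := (QuotientGroup.eq_one_iff a).mpr ha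
  refine ⟨_, hU, ?_, ?_⟩
  · rintro _ ⟨a, ha, rfl⟩
    convert Set.ncard_empty (G ⧸ H)
    refine Set.eq_empty_of_forall_notMem ?_
    rintro _ ⟨⟨b, hb, rfl⟩, hadj⟩
    exact ((cosetGraph_adj_mk hU a b).mp hadj).1 (mk_eq_one (mul_mem (inv_mem ha) hb))
  · intro v hv
    obtain ⟨g, rfl⟩ := QuotientGroup.mk_surjective v
    have hg : (g : G ⧸ A)⁻¹ ≠ 1 := by
      simpa [QuotientGroup.eq_one_iff] using (mk_mem_cosetsIn_iff hHA g).not.mp hv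
    refine Set.ncard_eq_one.mpr ⟨g * t (g : G ⧸ A)⁻¹, Set.ext fun w ↦ ?_⟩
    obtain ⟨b, rfl⟩ := QuotientGroup.mk_surjective w
    change (_ ∈ _ ∧ (cosetGraph H _).Adj _ _) ↔ _
    rw [mk_mem_cosetsIn_iff hHA, cosetGraph_adj_mk hU, Set.mem_singleton_iff]
    constructor
    · rintro ⟨hb, -, hbH⟩
      have hq : ((g⁻¹ * b : G) : G ⧸ A) = (g : G ⧸ A)⁻¹ := by simp [mk_eq_one hb]
      rw [hq] at hbH
      refine QuotientGroup.eq.mpr ?_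
      simpa [mul_assoc] using inv_mem hbH
    · intro hgb
      obtain ⟨h, hh, rfl⟩ : ∃ h ∈ H, g * t (g : G ⧸ A)⁻¹ * h = b :=
        ⟨_, QuotientGroup.eq.mp hgb.symm, by group⟩
      have hq : ((g⁻¹ * (g * t (g : G ⧸ A)⁻¹ * h) : G) : G ⧸ A) = (g : G ⧸ A)⁻¹ := by
        simp [ht_mk, mk_eq_one (hHA hh)]
      refine ⟨?_, ?_, ?_⟩
      · simpa [← QuotientGroup.eq_one_iff, ht_mk] using mk_eq_one (hHA hh)
      · rwa [hq]
      · rw [hq]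
        simpa [mul_assoc] using hh

end Transversal

/-- **Corollary.** Let `H ≤ A ⊴ G` and suppose `|A|` or `|G:A|` is odd. Then `A` is a
perfect code of `(G,H)` iff `G = N_G(H)A`. -/
theorem corollary_oddCase {G : Type*} [Group G] [Fintype G] (H A : Subgroup G)
    (hHA : H ≤ A) (hAnG : A.Normal) (hodd : Odd (Nat.card ↥A) ∨ Odd A.index) :
    IsPerfectCodeOfPair H A ↔
      (Subgroup.normalizer (H : Set G) : Set G) * (A : Set G) = Set.univ := by
  refine ⟨IsPerfectCodeOfPair.normalizer_mul_eq_univ hHA, fun hNA ↦ ?_⟩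
  obtain ⟨t, ht_mem, ht_mk, ht_inv⟩ :=
    exists_transversal_mul_inv_mem hNA (exists_mem_mk_eq_mul_self_mem_of_odd hNA hodd)
  exact isPerfectCodeOfPair_of_transversal hHA ht_mem ht_mk ht_inv
end

section
/- Let G be a finite group, A a normal subgroup of G, p a prime, and H a Sylow p-subgroup of A. Then A is a perfect code of the pair (G,H) if and only if for every x ∈ G∖A with x² ∈ A there exists a ∈ A such that xa ∈ N_G(H) and (xa)² ∈ H. -/
open scoped Pointwise

/-
For `H ≤ A ⊴ G` and a connection set `U`, the neighbours of `xH` inside `A/H` are the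
cosets of `A ∩ xU`, so `A` is a perfect code exactly when `U ∩ A = ∅` and every slice `U ∩ yA`
with `y ∉ A` is a single left coset `uH`. Since `HUH = U`, such a `u` normalises `H`, and when
`yA` is an involution of `G/A` the inverse-closedness of `U` forces `u² ∈ H`. Conversely, by the
Frattini argument every coset of `A` meets `N_G(H)`, so one can pick `u_q ∈ q ∩ N_G(H)` for every
`q ∈ G/A` with `u_{q⁻¹} ≡ u_q⁻¹ (mod H)`, and the union of the cosets `u_q H`, `q ≠ 1`, is a
connection set for which `A` is a perfect code.
-/

section CosetGraph

variable {G : Type*} [Group G] {H A : Subgroup G} {U : Set G}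

theorem IsCosetGraphConnectionSet.mul_mul_mem (hU : IsCosetGraphConnectionSet H U)
    {h u h' : G} (hh : h ∈ H) (hu : u ∈ U) (hh' : h' ∈ H) : h * u * h' ∈ U :=
  hU.2.2 ▸ Set.mul_mem_mul (Set.mul_mem_mul hh hu) hh'

theorem IsCosetGraphConnectionSet.inv_mul_mem_of_mk_eq_s14 (hU : IsCosetGraphConnectionSet H U)
    {g₁ g₂ x y : G} (h₁ : (g₁ : G ⧸ H) = x) (h₂ : (g₂ : G ⧸ H) = y) (hg : g₁⁻¹ * g₂ ∈ U) :
    x⁻¹ * y ∈ U := by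
  have e₁ : g₁⁻¹ * x ∈ H := QuotientGroup.eq.mp h₁
  have e₂ : g₂⁻¹ * y ∈ H := QuotientGroup.eq.mp h₂
  have heq : x⁻¹ * y = (g₁⁻¹ * x)⁻¹ * (g₁⁻¹ * g₂) * (g₂⁻¹ * y) := by group
  exact heq ▸ hU.mul_mul_mem (H.inv_mem e₁) hg e₂

theorem cosetGraph_adj_mk_iff (hU : IsCosetGraphConnectionSet H U) (x y : G) :
    (cosetGraph H U).Adj x y ↔ x⁻¹ * y ∈ U := by
  rw [cosetGraph, SimpleGraph.fromRel_adj]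
  constructor
  · rintro ⟨-, ⟨g₁, g₂, h₁, h₂, hg⟩ | ⟨g₁, g₂, h₁, h₂, hg⟩⟩
    · exact hU.inv_mul_mem_of_mk_eq_s14 h₁ h₂ hg
    · rw [← hU.1, Set.mem_inv, mul_inv_rev, inv_inv]
      exact hU.inv_mul_mem_of_mk_eq_s14 h₁ h₂ hg
  · intro hxy
    refine ⟨fun heq => ?_, Or.inl ⟨x, y, rfl, rfl, hxy⟩⟩
    exact hU.2.1.subset ⟨QuotientGroup.eq.mp heq, hxy⟩

theorem cosetGraph_neighbours_in_eq_image (hU : IsCosetGraphConnectionSet H U) (x : G) :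
    {w | w ∈ {C : G ⧸ H | ∃ a ∈ A, QuotientGroup.mk a = C} ∧ (cosetGraph H U).Adj x w} =
      (↑) '' {b | b ∈ A ∧ x⁻¹ * b ∈ U} := by
  ext w
  constructor
  · rintro ⟨⟨b, hb, rfl⟩, hadj⟩
    exact ⟨b, ⟨hb, (cosetGraph_adj_mk_iff hU x b).1 hadj⟩, rfl⟩
  · rintro ⟨b, ⟨hb, hxb⟩, rfl⟩
    exact ⟨⟨b, hb, rfl⟩, (cosetGraph_adj_mk_iff hU x b).2 hxb⟩

theorem ncard_image_mk_eq_one_iff {T : Set G} (hT : ∀ t ∈ T, ∀ h ∈ H, t * h ∈ T) :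
    ((↑) '' T : Set (G ⧸ H)).ncard = 1 ↔ ∃ g : G, T = g • (H : Set G) := by
  rw [Set.ncard_eq_one]
  constructor
  · rintro ⟨c, hc⟩
    obtain ⟨g, hg, rfl⟩ : c ∈ (↑) '' T := hc ▸ rfl
    refine ⟨g, Set.Subset.antisymm (fun t ht => ?_) ?_⟩
    · have : (t : G ⧸ H) = g := hc.subset ⟨t, ht, rfl⟩
      exact (mem_leftCoset_iff g).2 (QuotientGroup.eq.mp this.symm)
    · rintro _ ⟨h, hh, rfl⟩
      exact hT g hg h hh
  · rintro ⟨g, rfl⟩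
    refine ⟨g, Set.eq_singleton_iff_unique_mem.2 ⟨⟨g, ⟨1, H.one_mem, mul_one g⟩, rfl⟩, ?_⟩⟩
    rintro _ ⟨_, ⟨h, hh, rfl⟩, rfl⟩
    exact QuotientGroup.eq.mpr (by simpa using hh)

end CosetGraph

theorem exists_section_inv_mul_mem {Q M : Type*} [InvolutiveInv Q] [Group M] (K : Subgroup M)
    (S : Q → Set M) (hS : ∀ q, ∀ m ∈ S q, m⁻¹ ∈ S q⁻¹) (hne : ∀ q, (S q).Nonempty)
    (hfix : ∀ q, q⁻¹ = q → ∃ m ∈ S q, m * m ∈ K) :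
    ∃ s : Q → M, ∀ q, s q ∈ S q ∧ s q⁻¹ * s q ∈ K := by
  classical
  let : LinearOrder Q := linearOrderOfSTO WellOrderingRel
  have hc : ∀ q, ∃ m ∈ S q, q⁻¹ = q → m * m ∈ K := fun q => by
    by_cases h : q⁻¹ = q
    · exact (hfix q h).imp fun _ hm => ⟨hm.1, fun _ => hm.2⟩
    · exact (hne q).imp fun _ hm => ⟨hm, fun h' => absurd h' h⟩
  choose c hcS hcK using hc
  -- of each pair `q ≠ q⁻¹` only the smaller one is chosen freely; the other gets the inverse
  refine ⟨fun q => if q⁻¹ < q then (c q⁻¹)⁻¹ else c q, fun q => ⟨?_, ?_⟩⟩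
  · dsimp only
    split_ifs
    · simpa using hS _ _ (hcS q⁻¹)
    · exact hcS q
  · rcases lt_trichotomy q⁻¹ q with h | h | h
    · simp [h, lt_asymm h]
    · simpa [h] using hcK q h
    · simp [h, lt_asymm h]

section NormalSubgroup

variable {G : Type*} [Group G] {H A : Subgroup G} [hA : A.Normal] {U : Set G} {x g : G}

theorem mul_mem_normalizer_of_slice_eq_leftCoset [Finite G] (hHA : H ≤ A)
    (hU : IsCosetGraphConnectionSet H U) (hT : {b | b ∈ A ∧ x * b ∈ U} = g • (H : Set G)) :
    x * g ∈ Subgroup.normalizer (H : Set G) := by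
  have hg : g ∈ {b | b ∈ A ∧ x * b ∈ U} := hT ▸ mem_own_leftCoset H.toSubmonoid g
  suffices hconj : ∀ h ∈ H, (x * g)⁻¹ * h * (x * g) ∈ H by
    have hinv : (x * g)⁻¹ ∈ Subgroup.normalizer (H : Set G) :=
      Subgroup.mem_normalizer_fintype fun h hh => by simpa using hconj h hh
    simpa using Subgroup.inv_mem _ hinv
  intro h hh
  have hb : x⁻¹ * h * x * g ∈ {b | b ∈ A ∧ x * b ∈ U} := by
    refine ⟨A.mul_mem (by simpa using hA.conj_mem _ (hHA hh) x⁻¹) hg.1, ?_⟩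
    simpa [mul_assoc] using hU.mul_mul_mem hh hg.2 H.one_mem
  rw [hT, mem_leftCoset_iff] at hb
  simpa [mul_assoc] using hb

theorem mul_sq_mem_of_slice_eq_leftCoset (hU : U⁻¹ = U)
    (hT : {b | b ∈ A ∧ x * b ∈ U} = g • (H : Set G)) (hx : x ^ 2 ∈ A) : (x * g) ^ 2 ∈ H := by
  have hg : g ∈ {b | b ∈ A ∧ x * b ∈ U} := hT ▸ mem_own_leftCoset H.toSubmonoid g
  have hb : x⁻¹ * (x * g)⁻¹ ∈ {b | b ∈ A ∧ x * b ∈ U} := by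
    have heq : x⁻¹ * (x * g)⁻¹ = (x⁻¹ * g⁻¹ * x) * (x ^ 2)⁻¹ := by group
    refine ⟨heq ▸ A.mul_mem ?_ (A.inv_mem hx), ?_⟩
    · simpa using hA.conj_mem _ (A.inv_mem hg.1) x⁻¹
    · rw [mul_inv_cancel_left, ← Set.mem_inv, hU]
      exact hg.2
  rw [hT, mem_leftCoset_iff] at hb
  have heq : g⁻¹ * (x⁻¹ * (x * g)⁻¹) = ((x * g) ^ 2)⁻¹ := by rw [pow_two]; group
  rwa [heq, SetLike.mem_coe, inv_mem_iff] at hb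

theorem IsPerfectCodeOfPair.exists_mul_mem_normalizer [Finite G] (hHA : H ≤ A)
    (hcode : IsPerfectCodeOfPair H A) (hx : x ∉ A) (hx2 : x ^ 2 ∈ A) :
    ∃ a ∈ A, x * a ∈ Subgroup.normalizer (H : Set G) ∧ (x * a) ^ 2 ∈ H := by
  obtain ⟨U, hU, -, hone⟩ := hcode
  have hxinv : (↑x⁻¹ : G ⧸ H) ∉ {C : G ⧸ H | ∃ a ∈ A, QuotientGroup.mk a = C} := by
    rintro ⟨a, ha, hax⟩
    exact hx (by simpa using A.mul_mem ha (hHA (QuotientGroup.eq.mp hax)))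
  have hslice := hone _ hxinv
  rw [cosetGraph_neighbours_in_eq_image hU, ncard_image_mk_eq_one_iff, inv_inv] at hslice
  · obtain ⟨a, ha⟩ := hslice
    have haA : a ∈ A := (ha ▸ mem_own_leftCoset H.toSubmonoid a : a ∈ {b | b ∈ A ∧ x * b ∈ U}).1
    exact ⟨a, haA, mul_mem_normalizer_of_slice_eq_leftCoset hHA hU ha,
      mul_sq_mem_of_slice_eq_leftCoset hU.1 ha hx2⟩
  · rintro b ⟨hbA, hbU⟩ h hh
    exact ⟨A.mul_mem hbA (hHA hh), by simpa [mul_assoc] using hU.mul_mul_mem H.one_mem hbU hh⟩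

def sectionConnectionSet (H A : Subgroup G) (s : G ⧸ A → G) : Set G :=
  {v | v ∉ A ∧ v ∈ s v • (H : Set G)}

variable {s : G ⧸ A → G}

theorem isCosetGraphConnectionSet_sectionConnectionSet (hHA : H ≤ A)
    (hs_N : ∀ q, s q ∈ Subgroup.normalizer (H : Set G)) (hs_inv : ∀ q, s q⁻¹ * s q ∈ H) :
    IsCosetGraphConnectionSet H (sectionConnectionSet H A s) := by
  have hinv : ∀ v ∈ sectionConnectionSet H A s, v⁻¹ ∈ sectionConnectionSet H A s := by
    rintro v ⟨hvA, hv⟩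
    refine ⟨fun h => hvA (by simpa using A.inv_mem h), ?_⟩
    rw [mem_leftCoset_iff] at hv ⊢
    rw [QuotientGroup.mk_inv]
    set q : G ⧸ A := ↑v
    have heq : (s q⁻¹)⁻¹ * v⁻¹ = (s q⁻¹⁻¹ * s q⁻¹)⁻¹ * (s q * ((s q)⁻¹ * v)⁻¹ * (s q)⁻¹) := by
      rw [inv_inv]; group
    rw [heq]
    exact H.mul_mem (H.inv_mem (hs_inv q⁻¹))
      ((Subgroup.mem_normalizer_iff.mp (hs_N q) _).mp (H.inv_mem hv))
  refine ⟨Set.Subset.antisymm (fun v hv => by simpa using hinv _ hv) hinv, ?_, ?_⟩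
  · exact Set.eq_empty_iff_forall_notMem.mpr fun v hv => hv.2.1 (hHA hv.1)
  refine Set.Subset.antisymm ?_ fun v hv => ⟨1 * v, ⟨1, H.one_mem, v, hv, rfl⟩, 1, H.one_mem, by simp⟩
  rintro _ ⟨_, ⟨h, hh, v, ⟨hvA, hv⟩, rfl⟩, h', hh', rfl⟩
  have hmk : ((h * v * h' : G) : G ⧸ A) = v := by
    rw [QuotientGroup.mk_mul_of_mem _ (hHA hh'), QuotientGroup.mk_mul,
      (QuotientGroup.eq_one_iff h).mpr (hHA hh), one_mul]
  refine ⟨fun hA' => hvA ?_, ?_⟩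
  · rwa [← QuotientGroup.eq_one_iff, ← hmk, QuotientGroup.eq_one_iff]
  rw [mem_leftCoset_iff] at hv ⊢
  rw [hmk]
  have heq : (s v)⁻¹ * (h * v * h') = ((s v)⁻¹ * h * s v) * ((s v)⁻¹ * v) * h' := by group
  rw [heq]
  exact H.mul_mem (H.mul_mem ((Subgroup.mem_normalizer_iff''.mp (hs_N _) h).mp hh) hv) hh'

theorem sectionConnectionSet_slice (hHA : H ≤ A) (hs_mk : ∀ q, (s q : G ⧸ A) = q) (hx : x ∉ A) :
    {b | b ∈ A ∧ x⁻¹ * b ∈ sectionConnectionSet H A s} = (x * s x⁻¹) • (H : Set G) := by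
  ext b
  rw [mem_leftCoset_iff, mul_inv_rev, mul_assoc]
  constructor
  · rintro ⟨hb, -, hxb⟩
    rwa [mem_leftCoset_iff, QuotientGroup.mk_mul_of_mem _ hb] at hxb
  · intro hxb
    have hb : (b : G ⧸ A) = 1 := by
      rw [← mul_inv_cancel_left x b, ← mul_inv_cancel_left (s x⁻¹) (x⁻¹ * b), ← mul_assoc,
        QuotientGroup.mk_mul_of_mem _ (hHA hxb), QuotientGroup.mk_mul, hs_mk,
        mul_inv_cancel]
    rw [QuotientGroup.eq_one_iff] at hb
    refine ⟨hb, fun h => hx ?_, ?_⟩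
    · simpa using A.mul_mem hb (A.inv_mem h)
    · rwa [mem_leftCoset_iff, QuotientGroup.mk_mul_of_mem _ hb]

theorem isPerfectCodeOfPair_of_section (hHA : H ≤ A) (hs_mk : ∀ q, (s q : G ⧸ A) = q)
    (hs_N : ∀ q, s q ∈ Subgroup.normalizer (H : Set G)) (hs_inv : ∀ q, s q⁻¹ * s q ∈ H) :
    IsPerfectCodeOfPair H A := by
  have hU := isCosetGraphConnectionSet_sectionConnectionSet hHA hs_N hs_inv
  refine ⟨_, hU, ?_, fun v hv => ?_⟩
  · rintro _ ⟨a, ha, rfl⟩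
    have hslice : {b | b ∈ A ∧ a⁻¹ * b ∈ sectionConnectionSet H A s} = ∅ :=
      Set.eq_empty_iff_forall_notMem.mpr fun b hb => hb.2.1 (A.mul_mem (A.inv_mem ha) hb.1)
    rw [cosetGraph_neighbours_in_eq_image hU, hslice, Set.image_empty, Set.ncard_empty]
  · obtain ⟨x, rfl⟩ := QuotientGroup.mk_surjective v
    have hx : x ∉ A := fun hx => hv ⟨x, hx, rfl⟩
    rw [cosetGraph_neighbours_in_eq_image hU, sectionConnectionSet_slice hHA hs_mk hx]
    refine (ncard_image_mk_eq_one_iff fun t ht h hh => ?_).2 ⟨_, rfl⟩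
    rw [mem_leftCoset_iff] at ht ⊢
    simpa [mul_assoc] using H.mul_mem ht hh

theorem isPerfectCodeOfPair_of_forall_sq_mem (hHA : H ≤ A)
    (hNA : Subgroup.normalizer (H : Set G) ⊔ A = ⊤)
    (hsq : ∀ x : G, x ∉ A → x ^ 2 ∈ A →
      ∃ a ∈ A, x * a ∈ Subgroup.normalizer (H : Set G) ∧ (x * a) ^ 2 ∈ H) :
    IsPerfectCodeOfPair H A := by
  have hne : ∀ q : G ⧸ A, ∃ n ∈ Subgroup.normalizer (H : Set G), (n : G ⧸ A) = q := by
    intro q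
    obtain ⟨x, rfl⟩ := QuotientGroup.mk_surjective q
    obtain ⟨n, hn, a, ha, rfl⟩ := Subgroup.mem_sup_of_normal_right.mp (hNA ▸ Subgroup.mem_top x)
    exact ⟨n, hn, (QuotientGroup.mk_mul_of_mem n ha).symm⟩
  have hfix : ∀ q : G ⧸ A, q⁻¹ = q →
      ∃ n ∈ Subgroup.normalizer (H : Set G), (n : G ⧸ A) = q ∧ n * n ∈ H := by
    intro q hq
    obtain ⟨x, rfl⟩ := QuotientGroup.mk_surjective q
    by_cases hx : x ∈ A
    · exact ⟨1, Subgroup.one_mem _, ((QuotientGroup.eq_one_iff x).mpr hx).symm, by simp⟩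
    have hx2 : x ^ 2 ∈ A := by
      rw [← QuotientGroup.eq_one_iff, pow_two, QuotientGroup.mk_mul]
      nth_rewrite 1 [← hq]
      exact inv_mul_cancel _
    obtain ⟨a, ha, hN, hH⟩ := hsq x hx hx2
    exact ⟨x * a, hN, QuotientGroup.mk_mul_of_mem x ha, pow_two (x * a) ▸ hH⟩
  obtain ⟨s, hs⟩ := exists_section_inv_mul_mem H
    (fun q : G ⧸ A => {n | n ∈ Subgroup.normalizer (H : Set G) ∧ (n : G ⧸ A) = q})
    (fun q n hn => ⟨Subgroup.inv_mem _ hn.1, by rw [QuotientGroup.mk_inv, hn.2]⟩)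
    (fun q => (hne q).imp fun _ => id)
    (fun q hq => (hfix q hq).imp fun _ hn => ⟨⟨hn.1, hn.2.1⟩, hn.2.2⟩)
  exact isPerfectCodeOfPair_of_section hHA (fun q => (hs q).1.2) (fun q => (hs q).1.1)
    fun q => (hs q).2

end NormalSubgroup

/-- **Corollary.** Let `A ⊴ G` and let `H` be a Sylow `p`-subgroup of `A`. Then `A` is a
perfect code of `(G,H)` iff for every `x ∈ G∖A` with `x² ∈ A` there exists `a ∈ A` such
that `xa ∈ N_G(H)` and `(xa)² ∈ H`. -/
theorem corollary_sylow {G : Type*} [Group G] [Fintype G] (A : Subgroup G)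
    (hAnG : A.Normal) (p : ℕ) (hp : p.Prime) (P : Sylow p ↥A) (H : Subgroup G)
    (hH : H = Subgroup.map A.subtype ↑P) :
    IsPerfectCodeOfPair H A ↔
      ∀ x : G, x ∉ A → x ^ 2 ∈ A →
        ∃ a ∈ A, x * a ∈ Subgroup.normalizer (H : Set G) ∧ (x * a) ^ 2 ∈ H := by
  have : Fact p.Prime := ⟨hp⟩
  have hHA : H ≤ A := hH ▸ Subgroup.map_subtype_le _
  have hNA : Subgroup.normalizer (H : Set G) ⊔ A = ⊤ := hH ▸ Sylow.normalizer_sup_eq_top P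
  exact ⟨fun hcode _ hx hx2 => hcode.exists_mul_mem_normalizer hHA hx hx2,
    isPerfectCodeOfPair_of_forall_sq_mem hHA hNA⟩
end
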